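/- arXiv:0906.1374 — 2 statements merged into one kernel-verified Lean document; each statement's English description precedes it below -/
import Mathlib

section
/- For every smooth compactly supported function f : ℝ^n → ℂ there exist a Schwartz function g ∈ 𝒮(ℝ^n) and a Schwartz function F ∈ 𝒮(ℝ^{2n+1}) such that π̂(F)g = f, i.e. for every t ∈ ℝ^n, ∫∫∫ F(x,ξ,τ) e^{−2πiτ} e^{πi x·ξ} e^{−2πi ξ·(t+x)} g(t+x) dx dξ dτ = f(t). -/
open MeasureTheory

/-- The underlying space of the Heisenberg group `H_n = ℝ^n × ℝ^n × ℝ`. -/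
abbrev Heis (n : ℕ) := (Fin n → ℝ) × (Fin n → ℝ) × ℝ

set_option maxHeartbeats 1000000

open Complex SchwartzMap
open scoped Real FourierTransform

noncomputable section

namespace HeisAux

variable {D : Type*} [NormedAddCommGroup D] [NormedSpace ℝ D]

theorem expQuad_bound {Q : D → ℂ} (hQ : ContDiff ℝ (⊤:ℕ∞) Q)
    {B : D →L[ℝ] D →L[ℝ] ℂ} (hB : ∀ x, fderiv ℝ Q x = B x) (m : ℕ) :
    ∃ C : ℝ, 0 ≤ C ∧ ∀ i ≤ m, ∀ x : D, ‖iteratedFDeriv ℝ i (fun y => Complex.exp (Q y)) x‖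
      ≤ C * (1 + ‖x‖) ^ i * Real.exp (Q x).re := by
  have hfE : ContDiff ℝ (⊤:ℕ∞) (fun y => Complex.exp (Q y)) := Complex.contDiff_exp.comp hQ
  have hone : ∀ x : D, (1:ℝ) ≤ 1 + ‖x‖ := fun x => le_add_of_nonneg_right (norm_nonneg x)
  induction m with
  | zero =>
    refine ⟨1, zero_le_one, ?_⟩
    intro i hi x
    obtain rfl : i = 0 := Nat.le_zero.mp hi
    simp [norm_iteratedFDeriv_zero, Complex.norm_exp]
  | succ m ih =>
    obtain ⟨C, hC0, hC⟩ := ih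
    have hfd : (fderiv ℝ fun y => Complex.exp (Q y))
        = fun y => Complex.exp (Q y) • (B y : D →L[ℝ] ℂ) := by
      funext y
      have h1 : HasFDerivAt Q (B y) y := by
        rw [← hB y]; exact (hQ.differentiable (by simp) y).hasFDerivAt
      exact h1.cexp.fderiv
    have hBsm : ContDiff ℝ (⊤:ℕ∞) (fun y : D => (B y : D →L[ℝ] ℂ)) := B.contDiff
    have hBd : ∀ (j : ℕ) (x : D),
        ‖iteratedFDeriv ℝ j (fun y : D => (B y : D →L[ℝ] ℂ)) x‖ ≤ ‖B‖ * (1 + ‖x‖) := by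
      intro j x
      match j with
      | 0 =>
        rw [norm_iteratedFDeriv_zero]
        calc ‖B x‖ ≤ ‖B‖ * ‖x‖ := B.le_opNorm x
        _ ≤ ‖B‖ * (1 + ‖x‖) := by
            have := norm_nonneg x; nlinarith [norm_nonneg B]
      | 1 =>
        have h0 : ‖iteratedFDeriv ℝ 0 (fderiv ℝ (fun y : D => (B y : D →L[ℝ] ℂ))) x‖
            = ‖iteratedFDeriv ℝ 1 (fun y : D => (B y : D →L[ℝ] ℂ)) x‖ :=
          norm_iteratedFDeriv_fderiv
        rw [← h0, norm_iteratedFDeriv_zero, B.fderiv]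
        have := hone x; nlinarith [norm_nonneg B, norm_nonneg x]
      | (k+2) =>
        have h0 : ‖iteratedFDeriv ℝ (k+1) (fderiv ℝ (fun y : D => (B y : D →L[ℝ] ℂ))) x‖
            = ‖iteratedFDeriv ℝ (k+2) (fun y : D => (B y : D →L[ℝ] ℂ)) x‖ :=
          norm_iteratedFDeriv_fderiv
        rw [← h0]
        have : (fderiv ℝ (fun y : D => (B y : D →L[ℝ] ℂ))) = fun _ => B := by
          funext y; exact B.fderiv
        rw [this, iteratedFDeriv_const_of_ne (Nat.succ_ne_zero k)]
        simp
        positivity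
    refine ⟨max C (C * ‖B‖ * 2 ^ m), le_max_of_le_left hC0, ?_⟩
    intro i hi x
    have hre : (0:ℝ) ≤ Real.exp (Q x).re := Real.exp_nonneg _
    rcases Nat.lt_succ_iff_lt_or_eq.mp (Nat.lt_succ_of_le hi) with h | rfl
    · have := hC i (Nat.lt_succ_iff.mp h) x
      refine this.trans ?_
      have h1 : (0:ℝ) ≤ (1 + ‖x‖) ^ i * Real.exp (Q x).re := by positivity
      nlinarith [le_max_left C (C * ‖B‖ * 2 ^ m)]
    · -- i = m + 1
      have key : ‖iteratedFDeriv ℝ (m+1) (fun y => Complex.exp (Q y)) x‖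
          = ‖iteratedFDeriv ℝ m (fun y => Complex.exp (Q y) • (B y : D →L[ℝ] ℂ)) x‖ := by
        rw [← hfd, norm_iteratedFDeriv_fderiv]
      rw [key]
      have hsum := norm_iteratedFDeriv_smul_le (𝕜 := ℝ) (𝕜' := ℂ)
        hfE hBsm x (by exact_mod_cast le_top : (m : WithTop ℕ∞) ≤ ((⊤:ℕ∞) : WithTop ℕ∞))
      refine hsum.trans ?_
      have hterm : ∀ j ∈ Finset.range (m+1),
          (m.choose j : ℝ) * ‖iteratedFDeriv ℝ j (fun y => Complex.exp (Q y)) x‖ *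
            ‖iteratedFDeriv ℝ (m - j) (fun y : D => (B y : D →L[ℝ] ℂ)) x‖
          ≤ (m.choose j : ℝ) * (C * (1 + ‖x‖) ^ m * Real.exp (Q x).re * (‖B‖ * (1 + ‖x‖))) := by
        intro j hj
        have hj' : j ≤ m := Nat.lt_succ_iff.mp (Finset.mem_range.mp hj)
        have h1 := hC j hj' x
        have h2 : ‖iteratedFDeriv ℝ j (fun y => Complex.exp (Q y)) x‖
            ≤ C * (1 + ‖x‖) ^ m * Real.exp (Q x).re := by
          refine h1.trans ?_
          have h4 : (1 + ‖x‖) ^ j ≤ (1 + ‖x‖) ^ m := pow_le_pow_right₀ (hone x) hj'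
          exact mul_le_mul_of_nonneg_right
            (mul_le_mul_of_nonneg_left h4 hC0) (Real.exp_nonneg (Q x).re)
        have h3 := hBd (m - j) x
        have hnn1 : (0:ℝ) ≤ ‖iteratedFDeriv ℝ (m-j) (fun y : D => (B y : D →L[ℝ] ℂ)) x‖ :=
          norm_nonneg _
        have hnn2 : (0:ℝ) ≤ ‖iteratedFDeriv ℝ j (fun y => Complex.exp (Q y)) x‖ := norm_nonneg _
        have hc : (0:ℝ) ≤ (m.choose j : ℝ) := Nat.cast_nonneg _
        have hCx : (0:ℝ) ≤ C * (1 + ‖x‖) ^ m * Real.exp (Q x).re := by positivity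
        calc (m.choose j : ℝ) * ‖iteratedFDeriv ℝ j (fun y => Complex.exp (Q y)) x‖ *
              ‖iteratedFDeriv ℝ (m - j) (fun y : D => (B y : D →L[ℝ] ℂ)) x‖
            ≤ (m.choose j : ℝ) * (C * (1 + ‖x‖) ^ m * Real.exp (Q x).re) *
              (‖B‖ * (1 + ‖x‖)) := by
              apply mul_le_mul
              · exact mul_le_mul_of_nonneg_left h2 hc
              · exact h3
              · exact hnn1
              · positivity
        _ = (m.choose j : ℝ) * (C * (1 + ‖x‖) ^ m * Real.exp (Q x).re * (‖B‖ * (1 + ‖x‖))) := by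
              ring
      refine (Finset.sum_le_sum hterm).trans ?_
      rw [← Finset.sum_mul]
      have hchoose : (∑ j ∈ Finset.range (m+1), (m.choose j : ℝ)) = 2 ^ m := by
        rw [← Nat.cast_sum]
        norm_cast
        exact Nat.sum_range_choose m
      rw [hchoose]
      have : (2:ℝ) ^ m * (C * (1 + ‖x‖) ^ m * Real.exp (Q x).re * (‖B‖ * (1 + ‖x‖)))
          = (C * ‖B‖ * 2 ^ m) * (1 + ‖x‖) ^ (m+1) * Real.exp (Q x).re := by ring
      rw [this]
      have h1 : (0:ℝ) ≤ (1 + ‖x‖) ^ (m+1) * Real.exp (Q x).re := by positivity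
      nlinarith [le_max_right C (C * ‖B‖ * 2 ^ m)]


theorem one_add_pow_le_exp (j : ℕ) {c : ℝ} (hc : 0 < c) :
    ∃ M : ℝ, 0 ≤ M ∧ ∀ t : ℝ, 0 ≤ t → (1 + t) ^ j ≤ M * Real.exp (c * t) := by
  rcases Nat.eq_zero_or_pos j with rfl | hj
  · refine ⟨1, zero_le_one, fun t ht => ?_⟩
    simpa using Real.one_le_exp (by positivity)
  · set s : ℝ := min 1 (c / j) with hs
    have hs0 : 0 < s := lt_min one_pos (by positivity)
    have hs1 : s ≤ 1 := min_le_left _ _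
    refine ⟨(1/s) ^ j, by positivity, fun t ht => ?_⟩
    have h1 : 1 + t ≤ (1/s) * Real.exp (s * t) := by
      have h3 : 1 + s * t ≤ Real.exp (s * t) := by
        have := Real.add_one_le_exp (s * t); linarith
      have h4 : s * (1 + t) ≤ 1 + s * t := by nlinarith
      rw [div_mul_eq_mul_div, le_div_iff₀ hs0]
      nlinarith
    calc (1 + t) ^ j ≤ ((1/s) * Real.exp (s * t)) ^ j := by
          apply pow_le_pow_left₀ (by positivity) h1
      _ = (1/s) ^ j * Real.exp (s * t) ^ j := mul_pow _ _ _
      _ = (1/s) ^ j * Real.exp ((j * s) * t) := by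
          rw [← Real.exp_nat_mul]; ring_nf
      _ ≤ (1/s) ^ j * Real.exp (c * t) := by
          have hjs : (j : ℝ) * s ≤ c := by
            have : s ≤ c / j := min_le_right _ _
            rw [le_div_iff₀ (by exact_mod_cast hj : (0:ℝ) < j)] at this
            linarith
          have := Real.exp_le_exp.mpr (mul_le_mul_of_nonneg_right hjs ht)
          have h0 : (0:ℝ) ≤ (1/s) ^ j := by positivity
          exact mul_le_mul_of_nonneg_left this h0

/-- exp of a quadratic with negative-definite-ish real part is Schwartz -/
def expQuadSchwartz {Q : D → ℂ} (hQ : ContDiff ℝ (⊤:ℕ∞) Q)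
    {B : D →L[ℝ] D →L[ℝ] ℂ} (hB : ∀ x, fderiv ℝ Q x = B x)
    {c d : ℝ} (hc : 0 < c) (hre : ∀ x, (Q x).re ≤ d - c * ‖x‖) : SchwartzMap D ℂ where
  toFun := fun y => Complex.exp (Q y)
  smooth' := Complex.contDiff_exp.comp hQ
  decay' := by
    intro k m
    obtain ⟨C, hC0, hC⟩ := expQuad_bound hQ hB m
    obtain ⟨M, hM0, hM⟩ := one_add_pow_le_exp (k + m) hc
    refine ⟨C * M * Real.exp d, fun x => ?_⟩
    have hone : (1:ℝ) ≤ 1 + ‖x‖ := le_add_of_nonneg_right (norm_nonneg x)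
    have h1 : ‖x‖ ^ k ≤ (1 + ‖x‖) ^ k :=
      pow_le_pow_left₀ (norm_nonneg x) (by linarith) k
    have h2 := hC m le_rfl x
    have hre' : Real.exp (Q x).re ≤ Real.exp d * Real.exp (-(c * ‖x‖)) := by
      rw [← Real.exp_add]
      exact Real.exp_le_exp.mpr (by linarith [hre x])
    have h3 : (1 + ‖x‖) ^ (k + m) ≤ M * Real.exp (c * ‖x‖) := hM ‖x‖ (norm_nonneg x)
    calc ‖x‖ ^ k * ‖iteratedFDeriv ℝ m (fun y => Complex.exp (Q y)) x‖
        ≤ (1 + ‖x‖) ^ k * (C * (1 + ‖x‖) ^ m * Real.exp (Q x).re) := by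
          apply mul_le_mul h1 h2 (norm_nonneg _) (by positivity)
      _ = C * (1 + ‖x‖) ^ (k + m) * Real.exp (Q x).re := by rw [pow_add]; ring
      _ ≤ C * (M * Real.exp (c * ‖x‖)) * (Real.exp d * Real.exp (-(c * ‖x‖))) := by
          apply mul_le_mul (mul_le_mul_of_nonneg_left h3 hC0) hre' (Real.exp_nonneg _)
            (by positivity)
      _ = C * M * Real.exp d * (Real.exp (c * ‖x‖) * Real.exp (-(c * ‖x‖))) := by ring
      _ = C * M * Real.exp d := by rw [← Real.exp_add, add_neg_cancel, Real.exp_zero, mul_one]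

theorem expQuadSchwartz_apply {Q : D → ℂ} (hQ : ContDiff ℝ (⊤:ℕ∞) Q)
    {B : D →L[ℝ] D →L[ℝ] ℂ} (hB : ∀ x, fderiv ℝ Q x = B x)
    {c d : ℝ} (hc : 0 < c) (hre : ∀ x, (Q x).re ≤ d - c * ‖x‖) (x : D) :
    expQuadSchwartz hQ hB hc hre x = Complex.exp (Q x) := rfl

theorem expQuad_temperate {Q : D → ℂ} (hQ : ContDiff ℝ (⊤:ℕ∞) Q)
    {B : D →L[ℝ] D →L[ℝ] ℂ} (hB : ∀ x, fderiv ℝ Q x = B x)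
    (hre : ∀ x, (Q x).re ≤ 0) :
    Function.HasTemperateGrowth (fun y => Complex.exp (Q y)) := by
  refine ⟨Complex.contDiff_exp.comp hQ, fun m => ?_⟩
  obtain ⟨C, hC0, hC⟩ := expQuad_bound hQ hB m
  refine ⟨m, C, fun x => (hC m le_rfl x).trans ?_⟩
  have h1 : Real.exp (Q x).re ≤ 1 := Real.exp_le_one_iff.mpr (hre x)
  have h2 : (0:ℝ) ≤ C * (1 + ‖x‖) ^ m := by positivity
  calc C * (1 + ‖x‖) ^ m * Real.exp (Q x).re ≤ C * (1 + ‖x‖) ^ m * 1 :=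
        mul_le_mul_of_nonneg_left h1 h2
    _ = C * (1 + ‖x‖) ^ m := mul_one _

section Quad

variable {ι : Type*} [Fintype ι]

def quadForm (c : ι → ℂ) (φ ψ : ι → (D →L[ℝ] ℝ)) : D → ℂ :=
  fun x => ∑ j, c j * ((φ j x : ℝ) : ℂ) * ((ψ j x : ℝ) : ℂ)

def quadB (c : ι → ℂ) (φ ψ : ι → (D →L[ℝ] ℝ)) : D →L[ℝ] (D →L[ℝ] ℂ) :=
  ∑ j, (c j • ((φ j).smulRight ((Complex.ofRealCLM : ℝ →L[ℝ] ℂ).comp (ψ j)))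
      + c j • ((ψ j).smulRight ((Complex.ofRealCLM : ℝ →L[ℝ] ℂ).comp (φ j))))

theorem quadForm_contDiff (c : ι → ℂ) (φ ψ : ι → (D →L[ℝ] ℝ)) :
    ContDiff ℝ (⊤:ℕ∞) (quadForm c φ ψ) := by
  apply ContDiff.sum
  intro j _
  exact (contDiff_const.mul
    ((Complex.ofRealCLM.comp (φ j)).contDiff)).mul ((Complex.ofRealCLM.comp (ψ j)).contDiff)

theorem quadForm_fderiv (c : ι → ℂ) (φ ψ : ι → (D →L[ℝ] ℝ)) (x : D) :
    fderiv ℝ (quadForm c φ ψ) x = quadB c φ ψ x := by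
  have h : ∀ j : ι, HasFDerivAt (fun y => c j * ((φ j y : ℝ) : ℂ) * ((ψ j y : ℝ) : ℂ))
      ((c j • ((φ j).smulRight ((Complex.ofRealCLM : ℝ →L[ℝ] ℂ).comp (ψ j)))
      + c j • ((ψ j).smulRight ((Complex.ofRealCLM : ℝ →L[ℝ] ℂ).comp (φ j)))) x) x := by
    intro j
    have hφ : HasFDerivAt (fun y : D => ((φ j y : ℝ) : ℂ))
        ((Complex.ofRealCLM : ℝ →L[ℝ] ℂ).comp (φ j)) x :=
      ((Complex.ofRealCLM : ℝ →L[ℝ] ℂ).comp (φ j)).hasFDerivAt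
    have hψ : HasFDerivAt (fun y : D => ((ψ j y : ℝ) : ℂ))
        ((Complex.ofRealCLM : ℝ →L[ℝ] ℂ).comp (ψ j)) x :=
      ((Complex.ofRealCLM : ℝ →L[ℝ] ℂ).comp (ψ j)).hasFDerivAt
    have hmul := (hφ.const_mul (c j)).mul hψ
    have hEq : ((c j * ((φ j x : ℝ) : ℂ)) • ((Complex.ofRealCLM : ℝ →L[ℝ] ℂ).comp (ψ j))
          + (((ψ j x : ℝ) : ℂ)) • (c j • ((Complex.ofRealCLM : ℝ →L[ℝ] ℂ).comp (φ j))))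
        = ((c j • ((φ j).smulRight ((Complex.ofRealCLM : ℝ →L[ℝ] ℂ).comp (ψ j)))
      + c j • ((ψ j).smulRight ((Complex.ofRealCLM : ℝ →L[ℝ] ℂ).comp (φ j)))) x) := by
      ext v
      simp only [ContinuousLinearMap.add_apply, ContinuousLinearMap.smul_apply,
        ContinuousLinearMap.smulRight_apply, ContinuousLinearMap.coe_comp,
        Function.comp_apply, Complex.ofRealCLM_apply, smul_eq_mul,
        ContinuousLinearMap.coe_smul, Pi.smul_apply, Complex.real_smul]
      ring
    exact hEq ▸ hmul
  have hsum : HasFDerivAt (quadForm c φ ψ) ((quadB c φ ψ) x) x := by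
    have := HasFDerivAt.fun_sum (fun j (_ : j ∈ Finset.univ) => h j)
    simp only [quadB, ContinuousLinearMap.sum_apply]; exact this
  exact hsum.fderiv

end Quad


section Tensor

variable {E F : Type*} [NormedAddCommGroup E] [NormedSpace ℝ E]
  [NormedAddCommGroup F] [NormedSpace ℝ F]

/-- tensor product of Schwartz functions -/
def tensorMul (A : SchwartzMap E ℂ) (Bf : SchwartzMap F ℂ) : SchwartzMap (E × F) ℂ where
  toFun p := A p.1 * Bf p.2
  smooth' := (A.smooth'.comp contDiff_fst).mul (Bf.smooth'.comp contDiff_snd)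
  decay' := by
    intro k m
    have hAs : ContDiff ℝ (⊤:ℕ∞) (fun q : E × F => A q.1) := A.smooth'.comp contDiff_fst
    have hBs : ContDiff ℝ (⊤:ℕ∞) (fun q : E × F => Bf q.2) := Bf.smooth'.comp contDiff_snd
    set SA : ℝ := 2 ^ k * ((Finset.Iic (k, m)).sup
      (fun p => SchwartzMap.seminorm ℝ p.1 p.2)) A with hSAdef
    set SB : ℝ := 2 ^ k * ((Finset.Iic (k, m)).sup
      (fun p => SchwartzMap.seminorm ℝ p.1 p.2)) Bf with hSBdef
    have hSA0 : 0 ≤ SA := by positivity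
    have hSB0 : 0 ≤ SB := by positivity
    refine ⟨2 ^ m * (SA * SB), fun p => ?_⟩
    have hA : ∀ i : ℕ, ‖iteratedFDeriv ℝ i (fun q : E × F => A q.1) p‖
        ≤ ‖iteratedFDeriv ℝ i (⇑A) p.1‖ := by
      intro i
      have hcomp := (ContinuousLinearMap.fst ℝ E F).iteratedFDeriv_comp_right
        (A.smooth' : ContDiff ℝ (⊤:ℕ∞) ⇑A) p
        (by exact_mod_cast (le_top : (i:ℕ∞) ≤ ⊤))
      rw [show (A.toFun : E → ℂ) = ⇑A from rfl] at hcomp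
      have heq : (fun q : E × F => A q.1) = (⇑A ∘ (ContinuousLinearMap.fst ℝ E F)) := rfl
      rw [heq, hcomp]
      refine (ContinuousMultilinearMap.norm_compContinuousLinearMap_le _ _).trans ?_
      have h1 : (∏ _j : Fin i, ‖(ContinuousLinearMap.fst ℝ E F)‖) ≤ 1 :=
        Finset.prod_le_one (fun _ _ => norm_nonneg _)
          (fun _ _ => ContinuousLinearMap.norm_fst_le ℝ E F)
      have h2 : (0:ℝ) ≤ ‖iteratedFDeriv ℝ i (⇑A) ((ContinuousLinearMap.fst ℝ E F) p)‖ :=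
        norm_nonneg _
      calc ‖iteratedFDeriv ℝ i (⇑A) ((ContinuousLinearMap.fst ℝ E F) p)‖ *
            (∏ _j : Fin i, ‖(ContinuousLinearMap.fst ℝ E F)‖)
          ≤ ‖iteratedFDeriv ℝ i (⇑A) ((ContinuousLinearMap.fst ℝ E F) p)‖ * 1 :=
            mul_le_mul_of_nonneg_left h1 h2
        _ = ‖iteratedFDeriv ℝ i (⇑A) p.1‖ := by rw [mul_one]; rfl
    have hB : ∀ i : ℕ, ‖iteratedFDeriv ℝ i (fun q : E × F => Bf q.2) p‖
        ≤ ‖iteratedFDeriv ℝ i (⇑Bf) p.2‖ := by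
      intro i
      have hcomp := (ContinuousLinearMap.snd ℝ E F).iteratedFDeriv_comp_right
        (Bf.smooth' : ContDiff ℝ (⊤:ℕ∞) ⇑Bf) p
        (by exact_mod_cast (le_top : (i:ℕ∞) ≤ ⊤))
      rw [show (Bf.toFun : F → ℂ) = ⇑Bf from rfl] at hcomp
      have heq : (fun q : E × F => Bf q.2) = (⇑Bf ∘ (ContinuousLinearMap.snd ℝ E F)) := rfl
      rw [heq, hcomp]
      refine (ContinuousMultilinearMap.norm_compContinuousLinearMap_le _ _).trans ?_
      have h1 : (∏ _j : Fin i, ‖(ContinuousLinearMap.snd ℝ E F)‖) ≤ 1 :=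
        Finset.prod_le_one (fun _ _ => norm_nonneg _)
          (fun _ _ => ContinuousLinearMap.norm_snd_le ℝ E F)
      have h2 : (0:ℝ) ≤ ‖iteratedFDeriv ℝ i (⇑Bf) ((ContinuousLinearMap.snd ℝ E F) p)‖ :=
        norm_nonneg _
      calc ‖iteratedFDeriv ℝ i (⇑Bf) ((ContinuousLinearMap.snd ℝ E F) p)‖ *
            (∏ _j : Fin i, ‖(ContinuousLinearMap.snd ℝ E F)‖)
          ≤ ‖iteratedFDeriv ℝ i (⇑Bf) ((ContinuousLinearMap.snd ℝ E F) p)‖ * 1 :=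
            mul_le_mul_of_nonneg_left h1 h2
        _ = ‖iteratedFDeriv ℝ i (⇑Bf) p.2‖ := by rw [mul_one]; rfl
    have hmul := norm_iteratedFDeriv_mul_le (𝕜 := ℝ) (A := ℂ) hAs hBs p
      (by exact_mod_cast le_top : (m : WithTop ℕ∞) ≤ ((⊤:ℕ∞) : WithTop ℕ∞))
    have hpk : ‖p‖ ^ k ≤ ((1 + ‖p.1‖) * (1 + ‖p.2‖)) ^ k := by
      apply pow_le_pow_left₀ (norm_nonneg p)
      have h1 : ‖p‖ = max ‖p.1‖ ‖p.2‖ := rfl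
      rw [h1]
      apply max_le
      · nlinarith [norm_nonneg p.1, norm_nonneg p.2]
      · nlinarith [norm_nonneg p.1, norm_nonneg p.2]
    have hterm : ∀ i ∈ Finset.range (m + 1),
        ‖p‖ ^ k * ((m.choose i : ℝ) * ‖iteratedFDeriv ℝ i (fun q : E × F => A q.1) p‖ *
          ‖iteratedFDeriv ℝ (m - i) (fun q : E × F => Bf q.2) p‖)
        ≤ (m.choose i : ℝ) * (SA * SB) := by
      intro i hi
      have hi' : i ≤ m := Nat.lt_succ_iff.mp (Finset.mem_range.mp hi)
      have h1 : (1 + ‖p.1‖) ^ k * ‖iteratedFDeriv ℝ i (⇑A) p.1‖ ≤ SA := by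
        rw [hSAdef]
        exact SchwartzMap.one_add_le_sup_seminorm_apply (𝕜 := ℝ) (m := (k, m)) le_rfl hi' A p.1
      have h2 : (1 + ‖p.2‖) ^ k * ‖iteratedFDeriv ℝ (m - i) (⇑Bf) p.2‖ ≤ SB := by
        rw [hSBdef]
        exact SchwartzMap.one_add_le_sup_seminorm_apply (𝕜 := ℝ) (m := (k, m)) le_rfl
          (Nat.sub_le m i) Bf p.2
      have hc0 : (0:ℝ) ≤ (m.choose i : ℝ) := Nat.cast_nonneg _
      calc ‖p‖ ^ k * ((m.choose i : ℝ) * ‖iteratedFDeriv ℝ i (fun q : E × F => A q.1) p‖ *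
            ‖iteratedFDeriv ℝ (m - i) (fun q : E × F => Bf q.2) p‖)
          ≤ ((1 + ‖p.1‖) * (1 + ‖p.2‖)) ^ k * ((m.choose i : ℝ) *
              ‖iteratedFDeriv ℝ i (⇑A) p.1‖ * ‖iteratedFDeriv ℝ (m - i) (⇑Bf) p.2‖) := by
            apply mul_le_mul hpk ?_ (by positivity) (by positivity)
            apply mul_le_mul (mul_le_mul_of_nonneg_left (hA i) hc0) (hB (m - i))
              (norm_nonneg _) (by positivity)
        _ = (m.choose i : ℝ) * (((1 + ‖p.1‖) ^ k * ‖iteratedFDeriv ℝ i (⇑A) p.1‖) *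
              ((1 + ‖p.2‖) ^ k * ‖iteratedFDeriv ℝ (m - i) (⇑Bf) p.2‖)) := by
            rw [mul_pow]; ring
        _ ≤ (m.choose i : ℝ) * (SA * SB) := by
            apply mul_le_mul_of_nonneg_left ?_ hc0
            apply mul_le_mul h1 h2 (by positivity) hSA0
    calc ‖p‖ ^ k * ‖iteratedFDeriv ℝ m (fun q : E × F => A q.1 * Bf q.2) p‖
        ≤ ‖p‖ ^ k * ∑ i ∈ Finset.range (m + 1),
            (m.choose i : ℝ) * ‖iteratedFDeriv ℝ i (fun q : E × F => A q.1) p‖ *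
            ‖iteratedFDeriv ℝ (m - i) (fun q : E × F => Bf q.2) p‖ :=
          mul_le_mul_of_nonneg_left hmul (by positivity)
      _ = ∑ i ∈ Finset.range (m + 1), ‖p‖ ^ k *
            ((m.choose i : ℝ) * ‖iteratedFDeriv ℝ i (fun q : E × F => A q.1) p‖ *
            ‖iteratedFDeriv ℝ (m - i) (fun q : E × F => Bf q.2) p‖) := Finset.mul_sum _ _ _
      _ ≤ ∑ i ∈ Finset.range (m + 1), (m.choose i : ℝ) * (SA * SB) := Finset.sum_le_sum hterm
      _ = 2 ^ m * (SA * SB) := by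
          rw [← Finset.sum_mul]
          congr 1
          rw [← Nat.cast_sum]
          norm_cast
          exact Nat.sum_range_choose m

theorem tensorMul_apply (A : SchwartzMap E ℂ) (Bf : SchwartzMap F ℂ) (p : E × F) :
    tensorMul A Bf p = A p.1 * Bf p.2 := rfl

/-- smooth compactly supported functions are Schwartz -/
def ofCompactSupport {h : E → ℂ} (hsm : ContDiff ℝ (⊤:ℕ∞) h) (hc : HasCompactSupport h) :
    SchwartzMap E ℂ where
  toFun := h
  smooth' := hsm
  decay' := by
    intro k m
    have hcont : Continuous (fun x => ‖x‖ ^ k * ‖iteratedFDeriv ℝ m h x‖) :=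
      (continuous_norm.pow k).mul
        ((hsm.continuous_iteratedFDeriv (by exact_mod_cast (le_top : (m:ℕ∞) ≤ ⊤))).norm)
    have hsupp2 : HasCompactSupport (fun x => ‖x‖ ^ k * ‖iteratedFDeriv ℝ m h x‖) :=
      ((hc.iteratedFDeriv m).norm).mul_left
    obtain ⟨C, hC⟩ := hcont.bounded_above_of_compact_support hsupp2
    refine ⟨C, fun x => ?_⟩
    have := hC x
    rw [Real.norm_eq_abs] at this
    exact (le_abs_self _).trans this

theorem ofCompactSupport_apply {h : E → ℂ} (hsm : ContDiff ℝ (⊤:ℕ∞) h)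
    (hc : HasCompactSupport h) (x : E) : ofCompactSupport hsm hc x = h x := rfl

end Tensor


section Instances

open ContinuousLinearMap

variable (n : ℕ)

abbrev Pn := Fin n → ℝ

/-- the quadratic form `-π ∑ xᵢ²` -/
def gaussQ : Pn n → ℂ :=
  quadForm (fun _ : Fin n => (-(Real.pi:ℝ) : ℂ))
    (fun i => ContinuousLinearMap.proj i) (fun i => ContinuousLinearMap.proj i)

theorem gaussQ_apply (x : Pn n) :
    gaussQ n x = ∑ i, (-(Real.pi:ℝ) : ℂ) * (x i : ℂ) * (x i : ℂ) := rfl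

theorem gaussQ_re (x : Pn n) : (gaussQ n x).re = -Real.pi * ∑ i, (x i)^2 := by
  have h : gaussQ n x = ((-Real.pi * ∑ i, (x i)^2 : ℝ) : ℂ) := by
    rw [gaussQ_apply]
    push_cast
    rw [Finset.mul_sum]
    congr 1; funext i; ring
  rw [h, Complex.ofReal_re]

theorem gaussQ_re_le (x : Pn n) : (gaussQ n x).re ≤ Real.pi - 2 * Real.pi * ‖x‖ := by
  rw [gaussQ_re]
  set S := ∑ i, (x i)^2 with hS
  have hS0 : 0 ≤ S := Finset.sum_nonneg (fun i _ => sq_nonneg _)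
  have hnorm : ‖x‖ ≤ Real.sqrt S := by
    apply pi_norm_le_iff_of_nonneg (Real.sqrt_nonneg S) |>.mpr
    intro i
    have h1 : (x i)^2 ≤ S := Finset.single_le_sum (fun j _ => sq_nonneg (x j)) (Finset.mem_univ i)
    have h2 : ‖x i‖ = Real.sqrt ((x i)^2) := by
      rw [Real.sqrt_sq_eq_abs, Real.norm_eq_abs]
    rw [h2]
    exact Real.sqrt_le_sqrt h1
  have hsq : (Real.sqrt S)^2 = S := Real.sq_sqrt hS0
  nlinarith [Real.pi_pos, Real.sqrt_nonneg S, sq_nonneg (Real.sqrt S - 1), norm_nonneg x]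

/-- the Gaussian Schwartz function on `ℝ^n` -/
def gaussN : SchwartzMap (Pn n) ℂ :=
  expQuadSchwartz (quadForm_contDiff _ _ _) (quadForm_fderiv _ _ _)
    (by positivity : (0:ℝ) < 2 * Real.pi) (gaussQ_re_le n)

theorem gaussN_apply (x : Pn n) :
    gaussN n x = Complex.exp (∑ i, (-(Real.pi:ℝ) : ℂ) * (x i : ℂ) * (x i : ℂ)) := rfl

/-- the quadratic form `-π τ²` on `ℝ` -/
def tauQ : ℝ → ℂ :=
  quadForm (fun _ : Fin 1 => (-(Real.pi:ℝ) : ℂ))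
    (fun _ => ContinuousLinearMap.id ℝ ℝ) (fun _ => ContinuousLinearMap.id ℝ ℝ)

theorem tauQ_apply (τ : ℝ) : tauQ τ = (-(Real.pi:ℝ) : ℂ) * (τ:ℂ) * (τ:ℂ) := by
  show (∑ _j : Fin 1, (-(Real.pi:ℝ) : ℂ) * (τ:ℂ) * (τ:ℂ)) = _
  rw [Fin.sum_univ_one]

theorem tauQ_re_le (τ : ℝ) : (tauQ τ).re ≤ Real.pi - 2 * Real.pi * ‖τ‖ := by
  have h : tauQ τ = ((-Real.pi * τ^2 : ℝ) : ℂ) := by rw [tauQ_apply]; push_cast; ring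
  rw [h, Complex.ofReal_re, Real.norm_eq_abs]
  nlinarith [Real.pi_pos, sq_nonneg (|τ| - 1), _root_.sq_abs τ]

/-- the Gaussian Schwartz function on `ℝ` -/
def gauss1 : SchwartzMap ℝ ℂ :=
  expQuadSchwartz (quadForm_contDiff _ _ _) (quadForm_fderiv _ _ _)
    (by positivity : (0:ℝ) < 2 * Real.pi) tauQ_re_le

theorem gauss1_apply (τ : ℝ) :
    gauss1 τ = Complex.exp ((-(Real.pi:ℝ) : ℂ) * (τ:ℂ) * (τ:ℂ)) := by
  show Complex.exp (tauQ τ) = _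
  rw [tauQ_apply]

/-- the quadratic phase form `πi ∑ xᵢ ξᵢ` on the Heisenberg group -/
def phQ : (Pn n × (Pn n × ℝ)) → ℂ :=
  quadForm (fun _ : Fin n => (Real.pi : ℂ) * Complex.I)
    (fun i => (ContinuousLinearMap.proj i).comp (ContinuousLinearMap.fst ℝ (Pn n) (Pn n × ℝ)))
    (fun i => (ContinuousLinearMap.proj i).comp
      ((ContinuousLinearMap.fst ℝ (Pn n) ℝ).comp (ContinuousLinearMap.snd ℝ (Pn n) (Pn n × ℝ))))

theorem phQ_apply (p : Pn n × (Pn n × ℝ)) :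
    phQ n p = ∑ i, (Real.pi : ℂ) * Complex.I * (p.1 i : ℂ) * (p.2.1 i : ℂ) := by
  show (∑ i, (Real.pi : ℂ) * Complex.I * (p.1 i : ℂ) * (p.2.1 i : ℂ)) = _
  rfl

theorem phQ_re (p : Pn n × (Pn n × ℝ)) : (phQ n p).re ≤ 0 := by
  rw [phQ_apply]
  rw [Complex.re_sum]
  apply le_of_eq
  apply Finset.sum_eq_zero
  intro i _
  have : (Real.pi : ℂ) * Complex.I * (p.1 i : ℂ) * (p.2.1 i : ℂ)
      = (Real.pi * (p.1 i) * (p.2.1 i) : ℝ) * Complex.I := by push_cast; ring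
  rw [this]
  simp

theorem phase_temperate : Function.HasTemperateGrowth
    (fun p : Pn n × (Pn n × ℝ) => Complex.exp (phQ n p)) :=
  expQuad_temperate (quadForm_contDiff _ _ _) (quadForm_fderiv _ _ _) (phQ_re n)

end Instances


section Fourier

open FourierTransform SchwartzMap

variable {n : ℕ}

def eqEP : EuclideanSpace ℝ (Fin n) ≃L[ℝ] (Fin n → ℝ) := EuclideanSpace.equiv (Fin n) ℝ

/-- inverse Fourier transform, as a Schwartz map on the pi-type -/
def invFT (q : SchwartzMap (Fin n → ℝ) ℂ) : SchwartzMap (Fin n → ℝ) ℂ :=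
  SchwartzMap.compCLMOfContinuousLinearEquiv ℝ (eqEP (n := n)).symm
    ((SchwartzMap.fourierTransformCLE ℝ (𝓢(EuclideanSpace ℝ (Fin n), ℂ))).symm
      (SchwartzMap.compCLMOfContinuousLinearEquiv ℝ (eqEP (n := n)) q))

theorem invFT_integral (q : SchwartzMap (Fin n → ℝ) ℂ) (t : Fin n → ℝ) :
    ∫ ξ : Fin n → ℝ, invFT q ξ *
      Complex.exp ((-2) * (Real.pi:ℂ) * Complex.I * ((∑ i, ξ i * t i : ℝ) : ℂ)) = q t := by
  set qE : SchwartzMap (EuclideanSpace ℝ (Fin n)) ℂ :=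
    SchwartzMap.compCLMOfContinuousLinearEquiv ℝ (eqEP (n := n)) q with hqE
  set wE : SchwartzMap (EuclideanSpace ℝ (Fin n)) ℂ :=
    (SchwartzMap.fourierTransformCLE ℝ (𝓢(EuclideanSpace ℝ (Fin n), ℂ))).symm qE with hwE
  have hwP : ∀ y : Fin n → ℝ, invFT q y = wE ((eqEP (n := n)).symm y) := fun _ => rfl
  set tE : EuclideanSpace ℝ (Fin n) := (eqEP (n := n)).symm t with htE
  have me := EuclideanSpace.volume_preserving_symm_measurableEquiv_toLp (Fin n)
  have hint : ∫ ξ : Fin n → ℝ, invFT q ξ *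
      Complex.exp ((-2) * (Real.pi:ℂ) * Complex.I * ((∑ i, ξ i * t i : ℝ) : ℂ))
      = ∫ η : EuclideanSpace ℝ (Fin n),
          Complex.exp ((↑(-2 * Real.pi * (inner ℝ η tE : ℝ)) * Complex.I)) • wE η := by
    rw [← me.integral_comp (MeasurableEquiv.toLp 2 (Fin n → ℝ)).symm.measurableEmbedding]
    congr 1
    funext η
    have h1 : invFT q ((MeasurableEquiv.toLp 2 (Fin n → ℝ)).symm η) = wE η := rfl
    have h2 : ∀ i, ((MeasurableEquiv.toLp 2 (Fin n → ℝ)).symm η) i = η i := fun _ => rfl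
    have h3 : (inner ℝ η tE : ℝ) = ∑ i, η i * t i := by
      simp only [PiLp.inner_apply, RCLike.inner_apply, conj_trivial]
      congr 1
      funext i; exact mul_comm _ _
    rw [h1, show (∑ i, ((MeasurableEquiv.toLp 2 (Fin n → ℝ)).symm η) i * t i : ℝ)
      = ∑ i, η i * t i from rfl, h3, smul_eq_mul, mul_comm]
    congr 2
    push_cast
    ring
  rw [hint]
  have hFour : (∫ η : EuclideanSpace ℝ (Fin n),
      Complex.exp ((↑(-2 * Real.pi * (inner ℝ η tE : ℝ)) * Complex.I)) • wE η) = 𝓕 (⇑wE) tE :=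
    (Real.fourier_eq' (⇑wE) tE).symm
  rw [hFour]
  have hinv : 𝓕 (⇑wE) = ⇑qE := by
    have h4 : ⇑((SchwartzMap.fourierTransformCLE ℝ (𝓢(EuclideanSpace ℝ (Fin n), ℂ))) wE) = 𝓕 (⇑wE) :=
      rfl
    rw [← h4, hwE, ContinuousLinearEquiv.apply_symm_apply]
  rw [hinv]
  show q ((eqEP (n := n)) ((eqEP (n := n)).symm t)) = q t
  rw [ContinuousLinearEquiv.apply_symm_apply]

end Fourier

end HeisAux

end

/-- For every smooth compactly supported `f : ℝ^n → ℂ` there exist Schwartz functions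
`g ∈ 𝒮(ℝ^n)` and `F ∈ 𝒮(ℝ^{2n+1})` with `π̂(F)g = f`, i.e. for every `t ∈ ℝ^n`
`∫∫∫ F(x,ξ,τ) e^{−2πiτ} e^{πi x·ξ} e^{−2πi ξ·(t+x)} g(t+x) dx dξ dτ = f(t)`. -/
theorem exists_schwartz_reproducing {n : ℕ} (f : (Fin n → ℝ) → ℂ)
    (hf : ContDiff ℝ (⊤ : ℕ∞) f) (hsupp : HasCompactSupport f) :
    ∃ (g : SchwartzMap ((Fin n → ℝ)) ℂ) (F : SchwartzMap (Heis n) ℂ),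
      ∀ t : Fin n → ℝ,
        (∫ x : Fin n → ℝ, ∫ ξ : Fin n → ℝ, ∫ τ : ℝ,
          F (x, ξ, τ) *
            Complex.exp ((-2) * Real.pi * Complex.I * (τ : ℂ)) *
            Complex.exp (Real.pi * Complex.I * ((∑ i, x i * ξ i : ℝ) : ℂ)) *
            Complex.exp ((-2) * Real.pi * Complex.I * ((∑ i, ξ i * (t i + x i) : ℝ) : ℂ)) *
            g (t + x)) = f t := by
  classical
  have hsm : ContDiff ℝ (⊤:ℕ∞) f := hf.of_le (by simp)
  set κ : ℂ := ((Real.pi : ℂ) / (2 * (Real.pi : ℂ))) ^ ((1:ℂ)/2) with hκdef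
  have hπ : (Real.pi : ℂ) ≠ 0 := Complex.ofReal_ne_zero.mpr Real.pi_ne_zero
  have hκ : κ ≠ 0 := by
    rw [hκdef]
    intro h
    rcases (Complex.cpow_eq_zero_iff _ _).mp h with ⟨h1, -⟩
    exact (div_ne_zero hπ (by simpa using hπ)) h1
  have hκn : κ ^ n ≠ 0 := pow_ne_zero _ hκ
  set qfun : (Fin n → ℝ) → ℂ := fun t =>
    (Complex.exp ((Real.pi : ℂ)) * (κ ^ n)⁻¹ *
      Complex.exp (((Real.pi / 2 * ∑ i, (t i)^2 : ℝ) : ℂ))) * f t with hqfun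
  have hqsm : ContDiff ℝ (⊤:ℕ∞) qfun := by
    apply ContDiff.mul ?_ hsm
    apply ContDiff.mul contDiff_const
    apply Complex.contDiff_exp.comp
    apply Complex.ofRealCLM.contDiff.comp
    exact contDiff_const.mul (ContDiff.sum fun i _ =>
      ((ContinuousLinearMap.proj i : (Fin n → ℝ) →L[ℝ] ℝ).contDiff).pow 2)
  have hqsupp : HasCompactSupport qfun := hsupp.mul_left
  set qS : SchwartzMap (Fin n → ℝ) ℂ := HeisAux.ofCompactSupport hqsm hqsupp with hqS
  have hqS_apply : ∀ t, qS t = qfun t := fun _ => rfl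
  refine ⟨HeisAux.gaussN n, SchwartzMap.bilinLeftCLM (ContinuousLinearMap.mul ℝ ℂ) (HeisAux.phase_temperate n)
    (HeisAux.tensorMul (HeisAux.gaussN n) (HeisAux.tensorMul (HeisAux.invFT qS) HeisAux.gauss1)), fun t => ?_⟩
  set Ff := SchwartzMap.bilinLeftCLM (ContinuousLinearMap.mul ℝ ℂ) (HeisAux.phase_temperate n)
    (HeisAux.tensorMul (HeisAux.gaussN n) (HeisAux.tensorMul (HeisAux.invFT qS) HeisAux.gauss1)) with hFf
  have hFapp : ∀ p : Heis n, Ff p =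
      (HeisAux.gaussN n p.1 * (HeisAux.invFT qS p.2.1 * HeisAux.gauss1 p.2.2)) * Complex.exp (HeisAux.phQ n p) := fun _ => rfl
  set T : ℝ → ℂ := fun τ => HeisAux.gauss1 τ * Complex.exp ((-2) * Real.pi * Complex.I * (τ : ℂ)) with hT
  set Ξ : (Fin n → ℝ) → ℂ := fun ξ => HeisAux.invFT qS ξ *
    Complex.exp ((-2) * Real.pi * Complex.I * ((∑ i, ξ i * t i : ℝ) : ℂ)) with hΞ
  set X : (Fin n → ℝ) → ℂ := fun x => HeisAux.gaussN n x * HeisAux.gaussN n (t + x) with hX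
  have hpt : ∀ (x ξ : Fin n → ℝ) (τ : ℝ),
      Ff (x, ξ, τ) *
        Complex.exp ((-2) * Real.pi * Complex.I * (τ : ℂ)) *
        Complex.exp (Real.pi * Complex.I * ((∑ i, x i * ξ i : ℝ) : ℂ)) *
        Complex.exp ((-2) * Real.pi * Complex.I * ((∑ i, ξ i * (t i + x i) : ℝ) : ℂ)) *
        HeisAux.gaussN n (t + x) = T τ * (Ξ ξ * X x) := by
    intro x ξ τ
    have hphase : Complex.exp (HeisAux.phQ n (x, ξ, τ)) *
        (Complex.exp (Real.pi * Complex.I * ((∑ i, x i * ξ i : ℝ) : ℂ)) *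
         Complex.exp ((-2) * Real.pi * Complex.I * ((∑ i, ξ i * (t i + x i) : ℝ) : ℂ)))
        = Complex.exp ((-2) * Real.pi * Complex.I * ((∑ i, ξ i * t i : ℝ) : ℂ)) := by
      rw [← Complex.exp_add, ← Complex.exp_add]
      congr 1
      have hsum3 : HeisAux.phQ n (x, ξ, τ) = (Real.pi : ℂ) * Complex.I * ((∑ i, x i * ξ i : ℝ) : ℂ) := by
        rw [HeisAux.phQ_apply]
        rw [show ((∑ i, x i * ξ i : ℝ) : ℂ) = ∑ i, (x i : ℂ) * (ξ i : ℂ) by push_cast; rfl]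
        rw [Finset.mul_sum]
        exact Finset.sum_congr rfl fun i _ => by ring
      have hsum2 : ((∑ i, ξ i * (t i + x i) : ℝ) : ℂ)
          = ((∑ i, ξ i * t i : ℝ) : ℂ) + ((∑ i, x i * ξ i : ℝ) : ℂ) := by
        norm_cast
        rw [← Finset.sum_add_distrib]
        exact Finset.sum_congr rfl fun i _ => by ring
      rw [hsum3, hsum2]
      ring
    rw [hFapp (x, ξ, τ)]
    calc (HeisAux.gaussN n x * (HeisAux.invFT qS ξ * HeisAux.gauss1 τ)) * Complex.exp (HeisAux.phQ n (x, ξ, τ)) *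
          Complex.exp ((-2) * Real.pi * Complex.I * (τ : ℂ)) *
          Complex.exp (Real.pi * Complex.I * ((∑ i, x i * ξ i : ℝ) : ℂ)) *
          Complex.exp ((-2) * Real.pi * Complex.I * ((∑ i, ξ i * (t i + x i) : ℝ) : ℂ)) *
          HeisAux.gaussN n (t + x)
        = (HeisAux.gauss1 τ * Complex.exp ((-2) * Real.pi * Complex.I * (τ : ℂ))) *
          ((HeisAux.invFT qS ξ) * (HeisAux.gaussN n x * HeisAux.gaussN n (t + x))) *
          (Complex.exp (HeisAux.phQ n (x, ξ, τ)) *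
            (Complex.exp (Real.pi * Complex.I * ((∑ i, x i * ξ i : ℝ) : ℂ)) *
             Complex.exp ((-2) * Real.pi * Complex.I * ((∑ i, ξ i * (t i + x i) : ℝ) : ℂ)))) := by
          ring
      _ = T τ * (Ξ ξ * X x) := by rw [hphase]; ring
  have hTint : (∫ τ : ℝ, T τ) = Complex.exp (-(Real.pi : ℂ)) := by
    have h1 : (∫ τ : ℝ, T τ) = ∫ τ : ℝ, Complex.exp
        ((-(Real.pi:ℂ)) * (τ:ℂ)^2 + ((-2) * (Real.pi:ℂ) * Complex.I) * (τ:ℂ) + 0) := by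
      congr 1
      funext τ
      rw [hT]
      simp only []
      rw [HeisAux.gauss1_apply, ← Complex.exp_add]
      congr 1
      push_cast
      ring
    rw [h1, integral_cexp_quadratic (by simp [Real.pi_pos] : (-(Real.pi:ℂ)).re < 0)]
    have h2 : ((Real.pi:ℂ) / -(-(Real.pi:ℂ))) = 1 := by rw [neg_neg, div_self hπ]
    rw [h2, Complex.one_cpow, one_mul]
    congr 1
    rw [show ((-2) * (Real.pi:ℂ) * Complex.I)^2 = (4 * (Real.pi:ℂ)^2) * (Complex.I^2) by ring,
      Complex.I_sq]
    field_simp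
    ring
  have hΞint : (∫ ξ : Fin n → ℝ, Ξ ξ) = qfun t := by
    rw [hΞ]
    rw [show (∫ ξ : Fin n → ℝ, HeisAux.invFT qS ξ *
      Complex.exp ((-2) * Real.pi * Complex.I * ((∑ i, ξ i * t i : ℝ) : ℂ)))
      = qS t from HeisAux.invFT_integral qS t]
    exact hqS_apply t
  have hXint : (∫ x : Fin n → ℝ, X x)
      = κ ^ n * Complex.exp (((Real.pi / 2 * ∑ i, (t i)^2 : ℝ) : ℂ)) *
        Complex.exp (((-Real.pi * ∑ i, (t i)^2 : ℝ) : ℂ)) := by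
    have h1 : (∫ x : Fin n → ℝ, X x) = ∫ x : Fin n → ℝ,
        Complex.exp (-∑ i, (2*(Real.pi:ℂ)) * (x i:ℂ)^2 + ∑ i, ((-2)*(Real.pi:ℂ)*(t i:ℂ)) * (x i:ℂ))
        * Complex.exp (((-Real.pi * ∑ i, (t i)^2 : ℝ) : ℂ)) := by
      congr 1
      funext x
      rw [hX]
      simp only []
      rw [HeisAux.gaussN_apply, HeisAux.gaussN_apply, ← Complex.exp_add, ← Complex.exp_add]
      congr 1
      have hco : ∀ i, (((t + x) i : ℝ) : ℂ) = (t i : ℂ) + (x i : ℂ) := by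
        intro i; rw [Pi.add_apply]; push_cast; rfl
      simp only [hco]
      push_cast
      rw [← Finset.sum_neg_distrib, Finset.mul_sum, ← Finset.sum_add_distrib,
        ← Finset.sum_add_distrib, ← Finset.sum_add_distrib]
      exact Finset.sum_congr rfl fun i _ => by ring
    rw [h1, integral_mul_const]
    rw [GaussianFourier.integral_cexp_neg_sum_mul_add (fun i => by norm_num [Real.pi_pos] :
      ∀ i : Fin n, 0 < ((2*(Real.pi:ℂ)) : ℂ).re) (fun i => ((-2)*(Real.pi:ℂ)*(t i:ℂ)))]
    congr 1
    have hterm : ∀ i : Fin n, ((Real.pi:ℂ) / (2*(Real.pi:ℂ))) ^ ((1:ℂ)/2) *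
        Complex.exp ((((-2)*(Real.pi:ℂ)*(t i:ℂ))^2) / (4 * (2*(Real.pi:ℂ))))
        = κ * Complex.exp (((Real.pi / 2 * (t i)^2 : ℝ) : ℂ)) := by
      intro i
      rw [hκdef]
      congr 1
      congr 1
      push_cast
      field_simp
      ring
    calc (∏ i : Fin n, ((Real.pi:ℂ) / (2*(Real.pi:ℂ))) ^ ((1:ℂ)/2) *
          Complex.exp ((((-2)*(Real.pi:ℂ)*(t i:ℂ))^2) / (4 * (2*(Real.pi:ℂ)))))
        = ∏ i : Fin n, κ * Complex.exp (((Real.pi / 2 * (t i)^2 : ℝ) : ℂ)) :=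
          Finset.prod_congr rfl fun i _ => hterm i
      _ = κ ^ n * Complex.exp (((Real.pi / 2 * ∑ i, (t i)^2 : ℝ) : ℂ)) := by
          rw [Finset.prod_mul_distrib, Finset.prod_const, Finset.card_univ, Fintype.card_fin,
            ← Complex.exp_sum]
          congr 1
          push_cast
          rw [Finset.mul_sum]
  -- main chain
  calc (∫ x : Fin n → ℝ, ∫ ξ : Fin n → ℝ, ∫ τ : ℝ,
          Ff (x, ξ, τ) *
            Complex.exp ((-2) * Real.pi * Complex.I * (τ : ℂ)) *
            Complex.exp (Real.pi * Complex.I * ((∑ i, x i * ξ i : ℝ) : ℂ)) *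
            Complex.exp ((-2) * Real.pi * Complex.I * ((∑ i, ξ i * (t i + x i) : ℝ) : ℂ)) *
            HeisAux.gaussN n (t + x))
      = ∫ x : Fin n → ℝ, ∫ ξ : Fin n → ℝ, ∫ τ : ℝ, T τ * (Ξ ξ * X x) := by
        congr 1; funext x; congr 1; funext ξ; congr 1; funext τ; exact hpt x ξ τ
    _ = ∫ x : Fin n → ℝ, ∫ ξ : Fin n → ℝ, (∫ τ : ℝ, T τ) * (Ξ ξ * X x) := by
        congr 1; funext x; congr 1; funext ξ; exact integral_mul_const _ _
    _ = ∫ x : Fin n → ℝ, ∫ ξ : Fin n → ℝ, Ξ ξ * ((∫ τ : ℝ, T τ) * X x) := by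
        congr 1; funext x; congr 1; funext ξ; ring
    _ = ∫ x : Fin n → ℝ, (∫ ξ : Fin n → ℝ, Ξ ξ) * ((∫ τ : ℝ, T τ) * X x) := by
        congr 1; funext x; exact integral_mul_const _ _
    _ = ∫ x : Fin n → ℝ, X x * ((∫ τ : ℝ, T τ) * (∫ ξ : Fin n → ℝ, Ξ ξ)) := by
        congr 1; funext x; ring
    _ = (∫ x : Fin n → ℝ, X x) * ((∫ τ : ℝ, T τ) * (∫ ξ : Fin n → ℝ, Ξ ξ)) :=
        integral_mul_const _ _
    _ = f t := by
        rw [hTint, hΞint, hXint, hqfun]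
        simp only []
        calc (κ ^ n * Complex.exp (((Real.pi / 2 * ∑ i, (t i)^2 : ℝ) : ℂ)) *
              Complex.exp (((-Real.pi * ∑ i, (t i)^2 : ℝ) : ℂ))) *
              (Complex.exp (-(Real.pi : ℂ)) *
              ((Complex.exp ((Real.pi : ℂ)) * (κ ^ n)⁻¹ *
                Complex.exp (((Real.pi / 2 * ∑ i, (t i)^2 : ℝ) : ℂ))) * f t))
            = (κ ^ n * (κ ^ n)⁻¹) *
              (Complex.exp (((Real.pi / 2 * ∑ i, (t i)^2 : ℝ) : ℂ)) *
               Complex.exp (((-Real.pi * ∑ i, (t i)^2 : ℝ) : ℂ)) *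
               Complex.exp (-(Real.pi : ℂ)) * Complex.exp ((Real.pi : ℂ)) *
               Complex.exp (((Real.pi / 2 * ∑ i, (t i)^2 : ℝ) : ℂ))) * f t := by ring
          _ = f t := by
              rw [mul_inv_cancel₀ hκn, ← Complex.exp_add, ← Complex.exp_add,
                ← Complex.exp_add, ← Complex.exp_add]
              rw [show (((Real.pi / 2 * ∑ i, (t i)^2 : ℝ) : ℂ) +
                  ((-Real.pi * ∑ i, (t i)^2 : ℝ) : ℂ) + (-(Real.pi : ℂ)) + ((Real.pi : ℂ)) +
                  ((Real.pi / 2 * ∑ i, (t i)^2 : ℝ) : ℂ)) = 0 by push_cast; ring]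
              rw [Complex.exp_zero]
              ring
end

section
/- Let ρ ∈ 𝒮(ℝ²) be a Schwartz function with ∫_{ℝ²} ρ = 1 and ∫_{ℝ²} x^a y^b ρ(x,y) dx dy = 0 for every pair of nonnegative integers (a,b) ≠ (0,0). For ε ∈ (0,1) set ρ̃_ε(x,y) := ε^{−3} ρ(x/ε, y/ε²). Then for every smooth compactly supported f : ℝ² → ℂ and every N ∈ ℕ there exist C > 0 and ε₀ ∈ (0,1) such that sup_{(x,y)∈ℝ²} |(f * ρ̃_ε)(x,y) − f(x,y)| ≤ C·ε^N for all ε ∈ (0,ε₀), where * denotes ordinary convolution on ℝ². -/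
open MeasureTheory Set

open scoped NNReal ENNReal

theorem prod_smul_smul (c d : ℝ≥0) :
    ((c:ℝ≥0∞) • (volume : Measure ℝ)).prod ((d:ℝ≥0∞) • (volume : Measure ℝ))
      = ((c*d : ℝ≥0) : ℝ≥0∞) • ((volume : Measure ℝ).prod volume) := by
  have h1 : SigmaFinite ((c:ℝ≥0∞) • (volume : Measure ℝ)) := by
    rw [← ENNReal.smul_def]; infer_instance
  have h2 : SigmaFinite ((d:ℝ≥0∞) • (volume : Measure ℝ)) := by
    rw [← ENNReal.smul_def]; infer_instance
  refine Measure.prod_eq fun s t hs ht => ?_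
  simp [Measure.prod_prod]
  ring

noncomputable def scaleEquiv (ε : ℝ) (hε : 0 < ε) : (ℝ × ℝ) ≃ᵐ (ℝ × ℝ) :=
  (Homeomorph.prodCongr (Homeomorph.mulLeft₀ ε hε.ne') (Homeomorph.mulLeft₀ (ε^2) (by positivity))).toMeasurableEquiv

theorem scaleEquiv_apply (ε : ℝ) (hε : 0 < ε) (w : ℝ × ℝ) :
    scaleEquiv ε hε w = (ε * w.1, ε^2 * w.2) := rfl

theorem map_scaleEquiv (ε : ℝ) (hε : 0 < ε) :
    (volume : Measure (ℝ × ℝ)).map (scaleEquiv ε hε)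
      = ENNReal.ofReal ((ε^3)⁻¹) • (volume : Measure (ℝ × ℝ)) := by
  have hcoe : (⇑(scaleEquiv ε hε) : ℝ × ℝ → ℝ × ℝ) = Prod.map (ε * ·) (ε^2 * ·) := rfl
  rw [hcoe, Measure.volume_eq_prod,
    ← Measure.map_prod_map _ _ (measurable_const_mul ε) (measurable_const_mul (ε^2)),
    Real.map_volume_mul_left hε.ne', Real.map_volume_mul_left (by positivity : (ε:ℝ)^2 ≠ 0)]
  rw [abs_of_pos (by positivity), abs_of_pos (by positivity)]
  rw [ENNReal.ofReal, ENNReal.ofReal, ENNReal.ofReal, prod_smul_smul]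
  rw [← Real.toNNReal_mul (by positivity)]

  have : ε⁻¹ * (ε^2)⁻¹ = (ε^3)⁻¹ := by ring
  rw [this]


variable {E : Type*} [NormedAddCommGroup E] [NormedSpace ℝ E]

theorem cv_integral (ε : ℝ) (hε : 0 < ε) (F : ℝ × ℝ → E) :
    ∫ w : ℝ × ℝ, F (ε * w.1, ε^2 * w.2) = (ε^3)⁻¹ • ∫ w : ℝ × ℝ, F w := by
  have h := MeasureTheory.integral_map_equiv (μ := (volume : Measure (ℝ×ℝ))) (scaleEquiv ε hε) F
  rw [map_scaleEquiv ε hε, integral_smul_measure] at h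
  simp only [scaleEquiv_apply] at h
  rw [← h, ENNReal.toReal_ofReal (by positivity)]

theorem cv_integrable (ε : ℝ) (hε : 0 < ε) (F : ℝ × ℝ → E) (hF : Integrable F) :
    Integrable (fun w : ℝ × ℝ => F (ε * w.1, ε^2 * w.2)) := by
  have h := (MeasureTheory.integrable_map_equiv (μ := (volume : Measure (ℝ×ℝ))) (scaleEquiv ε hε) F)
  rw [map_scaleEquiv ε hε] at h
  have h2 : Integrable F (ENNReal.ofReal ((ε^3)⁻¹) • (volume : Measure (ℝ×ℝ))) := by
    refine (integrable_smul_measure (by simp [hε.ne']; positivity) ENNReal.ofReal_ne_top).mpr hF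
  exact h.mp h2

/-- The anisotropically scaled net `ρ̃_ε(x,y) = ε^{−3} ρ(x/ε, y/ε²)`. -/
noncomputable def anisoScale (ρ : ℝ × ℝ → ℂ) (ε : ℝ) : ℝ × ℝ → ℂ :=
  fun z => ((ε ^ 3 : ℝ)⁻¹ : ℂ) * ρ (z.1 / ε, z.2 / ε ^ 2)

lemma monomial_schwartz_integrable (ρ : SchwartzMap (ℝ×ℝ) ℂ) (a b : ℕ) :
    Integrable (fun z : ℝ×ℝ => ((z.1^a * z.2^b : ℝ):ℂ) * ρ z) := by
  refine (ρ.integrable_pow_mul volume (a+b)).mono' ?_ ?_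
  · exact (Continuous.mul (by fun_prop) ρ.continuous).aestronglyMeasurable
  · filter_upwards with z
    rw [norm_mul, Complex.norm_real]
    have h1 : |z.1 ^ a * z.2 ^ b| ≤ ‖z‖ ^ (a + b) := by
      calc |z.1^a * z.2^b| = |z.1|^a * |z.2|^b := by rw [abs_mul, abs_pow, abs_pow]
        _ ≤ ‖z‖^a * ‖z‖^b := by
            gcongr <;> first
              | exact abs_nonneg _
              | exact norm_fst_le z
              | exact norm_snd_le z
        _ = ‖z‖^(a+b) := (pow_add _ _ _).symm
    calc |z.1^a * z.2^b| * ‖ρ z‖ ≤ ‖z‖^(a+b) * ‖ρ z‖ := by gcongr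
      _ = _ := rfl

lemma moment_aniso_integrable (ρ : SchwartzMap (ℝ×ℝ) ℂ) {ε : ℝ} (hε : 0 < ε) (a b : ℕ) :
    Integrable (fun w : ℝ×ℝ => ((w.1^a * w.2^b : ℝ):ℂ) * anisoScale (⇑ρ) ε w) := by
  have hG := monomial_schwartz_integrable ρ a b
  have h := (cv_integrable ε⁻¹ (inv_pos.mpr hε) _ hG).const_mul
    (((ε^(a+2*b) * (ε^3)⁻¹ : ℝ)):ℂ)
  refine h.congr (Filter.Eventually.of_forall fun w => ?_)
  have harg : ((ε⁻¹ * w.1, (ε⁻¹)^2 * w.2) : ℝ×ℝ) = (w.1/ε, w.2/ε^2) := by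
    rw [Prod.mk.injEq]
    constructor
    · rw [div_eq_inv_mul]
    · rw [div_eq_inv_mul, inv_pow]
  simp only [harg, anisoScale]
  have hmul : ∀ (r s : ℝ) (zc : ℂ), (r:ℂ) * ((s:ℂ) * zc) = ((r*s :ℝ):ℂ) * zc := by
    intros; push_cast; ring
  rw [hmul, ← Complex.ofReal_inv, hmul]
  congr 1
  have hco : (ε^(a+2*b) * (ε^3)⁻¹) * ((ε⁻¹*w.1)^a * ((ε⁻¹)^2*w.2)^b) = (w.1^a*w.2^b) * (ε^3)⁻¹ := by
    field_simp
    rw [div_pow, div_pow]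
    field_simp
    ring
  exact_mod_cast congrArg Complex.ofReal hco

lemma moment_aniso (ρ : SchwartzMap (ℝ×ℝ) ℂ) {ε : ℝ} (hε : 0 < ε) (a b : ℕ) :
    ∫ w : ℝ×ℝ, ((w.1^a * w.2^b : ℝ):ℂ) * anisoScale (⇑ρ) ε w
      = ((ε^(a+2*b) : ℝ) : ℂ) * ∫ z : ℝ×ℝ, ((z.1^a * z.2^b : ℝ):ℂ) * ρ z := by
  have hcv := cv_integral ε hε (fun w : ℝ×ℝ => ((w.1^a * w.2^b : ℝ):ℂ) * anisoScale (⇑ρ) ε w)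
  have key : (fun w : ℝ×ℝ => ((((ε*w.1)^a * ((ε^2)*w.2)^b : ℝ)):ℂ) * anisoScale (⇑ρ) ε (ε*w.1, ε^2*w.2))
      = fun w : ℝ×ℝ => (((ε^(a+2*b) * (ε^3)⁻¹ : ℝ)):ℂ) * (((w.1^a*w.2^b:ℝ):ℂ) * ρ w) := by
    funext w
    have harg : ((ε*w.1/ε, ε^2*w.2/ε^2) : ℝ×ℝ) = (w.1, w.2) := by
      rw [Prod.mk.injEq]
      exact ⟨mul_div_cancel_left₀ _ hε.ne', mul_div_cancel_left₀ _ (pow_ne_zero 2 hε.ne')⟩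
    simp only [anisoScale, harg]
    push_cast
    ring
  simp only [key] at hcv
  rw [integral_const_mul] at hcv
  have h3 : (ε^3 : ℝ) • ((ε^3)⁻¹ • ∫ w : ℝ×ℝ, ((w.1^a * w.2^b : ℝ):ℂ) * anisoScale (⇑ρ) ε w)
      = ∫ w : ℝ×ℝ, ((w.1^a * w.2^b : ℝ):ℂ) * anisoScale (⇑ρ) ε w := by
    rw [smul_smul, mul_inv_cancel₀ (by positivity), one_smul]
  rw [← hcv] at h3
  rw [← h3]
  have hεc : ((ε:ℝ):ℂ) ≠ 0 := by exact_mod_cast hε.ne'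
  rw [Complex.real_smul]
  push_cast
  field_simp


theorem taylor_bound {E : Type} [NormedAddCommGroup E] [NormedSpace ℝ E] (M : ℕ) :
    ∀ {F : Type} [NormedAddCommGroup F] [NormedSpace ℝ F] (f : E → F),
      ContDiff ℝ (⊤ : ℕ∞) f → ∀ (K : ℝ), (∀ y, ‖iteratedFDeriv ℝ (M+1) f y‖ ≤ K) →
      ∀ (x h : E),
      ‖f (x + h) - ∑ k ∈ Finset.range (M+1),
          ((k.factorial : ℝ))⁻¹ • iteratedFDeriv ℝ k f x (fun _ => h)‖ ≤ K * ‖h‖^(M+1) := by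
  induction M with
  | zero =>
    intro F _ _ f hf K hK x h
    have hbound : ∀ y ∈ (univ : Set E), ‖fderiv ℝ f y‖ ≤ K := by
      intro y _
      have : ‖iteratedFDeriv ℝ 0 (fderiv ℝ f) y‖ = ‖iteratedFDeriv ℝ 1 f y‖ :=
        norm_iteratedFDeriv_fderiv
      rw [norm_iteratedFDeriv_zero] at this
      rw [this]; exact hK y
    have hmv := (convex_univ : Convex ℝ (univ : Set E)).norm_image_sub_le_of_norm_fderiv_le
      (fun y _ => hf.differentiable (by simp) y) hbound (mem_univ x) (mem_univ (x+h))
    simpa [norm_iteratedFDeriv_zero] using hmv.trans_eq (by rw [add_sub_cancel_left])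
  | succ M ih =>
    intro F _ _ f hf K hK x h
    have hK0 : 0 ≤ K := le_trans (norm_nonneg _) (hK x)
    set g := fderiv ℝ f with hg_def
    have hg : ContDiff ℝ (⊤ : ℕ∞) g := hf.fderiv_right (by simp)
    have hKg : ∀ y, ‖iteratedFDeriv ℝ (M+1) g y‖ ≤ K := by
      intro y; rw [norm_iteratedFDeriv_fderiv]; exact hK y
    have ihg := ih g hg K hKg
    set c : ℕ → F := fun k => iteratedFDeriv ℝ k f x (fun _ => h) with hc
    set φ : ℝ → F := fun t =>
      f (x + t • h) - ∑ k ∈ Finset.range (M+2), ((t^k * (k.factorial : ℝ)⁻¹)) • c k with hφ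
    set D : ℝ → F := fun t =>
      (g (x + t • h) - ∑ j ∈ Finset.range (M+1),
         ((j.factorial : ℝ)⁻¹) • iteratedFDeriv ℝ j g x (fun _ => t • h)) h with hD
    have hBh : ∀ (j : ℕ) (t : ℝ),
        (iteratedFDeriv ℝ j g x (fun _ => t • h)) h = (t^j) • c (j+1) := by
      intro j t
      have h1 : (fun _ : Fin j => t • h) = fun i : Fin j => (fun _ : Fin j => t) i • (fun _ : Fin j => h) i := rfl
      rw [h1, ContinuousMultilinearMap.map_smul_univ]
      simp only [Finset.prod_const, Finset.card_univ, Fintype.card_fin]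
      rw [ContinuousLinearMap.smul_apply]
      congr 1
      simp only [hg_def, hc]
      rw [iteratedFDeriv_succ_apply_right]
      rfl
    have hderiv : ∀ t : ℝ, HasDerivAt φ (D t) t := by
      intro t
      have hline : HasDerivAt (fun t : ℝ => x + t • h) h t := by
        simpa using ((hasDerivAt_id t).smul_const h).const_add x
      have hfd : HasFDerivAt f (g (x + t • h)) (x + t • h) :=
        (hf.differentiable (by simp) _).hasFDerivAt
      have h1 : HasDerivAt (fun s : ℝ => f (x + s • h)) (g (x + t • h) h) t :=
        hfd.comp_hasDerivAt t hline
      have h2 : HasDerivAt (fun s : ℝ => ∑ k ∈ Finset.range (M+2), ((s^k * (k.factorial : ℝ)⁻¹)) • c k)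
          (∑ k ∈ Finset.range (M+2), (((k:ℝ) * t^(k-1)) * (k.factorial : ℝ)⁻¹) • c k) t :=
        HasDerivAt.fun_sum fun k _ => ((hasDerivAt_pow k t).mul_const _).smul_const (c k)
      have hsum_eq : (∑ k ∈ Finset.range (M+2), (((k:ℝ) * t^(k-1)) * (k.factorial : ℝ)⁻¹) • c k)
          = ∑ j ∈ Finset.range (M+1), ((j.factorial : ℝ)⁻¹ • iteratedFDeriv ℝ j g x (fun _ => t • h)) h := by
        rw [Finset.sum_range_succ']
        simp only [ContinuousLinearMap.smul_apply, hBh]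
        rw [Nat.cast_zero, zero_mul, zero_mul, zero_smul, add_zero]
        refine Finset.sum_congr rfl fun j _ => ?_
        rw [smul_smul]
        congr 1
        rw [Nat.factorial_succ, Nat.cast_mul, mul_inv, Nat.cast_add, Nat.cast_one]
        have : ((j:ℝ) + 1) ≠ 0 := by positivity
        field_simp
        rw [Nat.add_sub_cancel]
      have := h1.fun_sub (h2)
      rw [hsum_eq] at this
      convert this using 1
      rw [hD]
      simp only [ContinuousLinearMap.sub_apply, ContinuousLinearMap.sum_apply]
    have hboundD : ∀ t ∈ Icc (0:ℝ) 1, ‖D t‖ ≤ K * ‖h‖^(M+2) := by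
      intro t ht
      rw [hD]
      calc ‖(g (x + t • h) - ∑ j ∈ Finset.range (M+1),
              ((j.factorial : ℝ)⁻¹) • iteratedFDeriv ℝ j g x (fun _ => t • h)) h‖
          ≤ ‖g (x + t • h) - ∑ j ∈ Finset.range (M+1),
              ((j.factorial : ℝ)⁻¹) • iteratedFDeriv ℝ j g x (fun _ => t • h)‖ * ‖h‖ :=
            ContinuousLinearMap.le_opNorm _ _
        _ ≤ (K * ‖t • h‖^(M+1)) * ‖h‖ := by
            gcongr
            exact ihg x (t • h)
        _ ≤ (K * ‖h‖^(M+1)) * ‖h‖ := by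
            gcongr
            rw [norm_smul]
            have : ‖t‖ ≤ 1 := by
              rw [Real.norm_eq_abs, abs_of_nonneg ht.1]; exact ht.2
            calc ‖t‖ * ‖h‖ ≤ 1 * ‖h‖ := by gcongr
              _ = ‖h‖ := one_mul _
        _ = K * ‖h‖^(M+2) := by ring
    have hmv := (convex_Icc (0:ℝ) 1).norm_image_sub_le_of_norm_hasDerivWithin_le
      (fun t ht => (hderiv t).hasDerivWithinAt) hboundD
      (left_mem_Icc.mpr zero_le_one) (right_mem_Icc.mpr zero_le_one)
    have hφ0 : φ 0 = 0 := by
      rw [hφ]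
      simp only [zero_smul, add_zero]
      rw [Finset.sum_eq_single_of_mem 0 (Finset.mem_range.mpr (by omega))]
      · simp [hc]
      · intro k _ hk
        rw [zero_pow hk, zero_mul, zero_smul]
    have hφ1 : φ 1 = f (x + h) - ∑ k ∈ Finset.range (M+2),
        ((k.factorial : ℝ))⁻¹ • iteratedFDeriv ℝ k f x (fun _ => h) := by
      rw [hφ]; simp [hc]
    have : ‖φ 1 - φ 0‖ ≤ K * ‖h‖^(M+2) * ‖(1:ℝ) - 0‖ := hmv
    rw [hφ0, sub_zero, hφ1] at this
    simpa using this

lemma sign_mono (x y : ℝ) (a b kk : ℕ) (hab : a + b = kk) :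
    (-x)^a * (-y)^b = (-1)^kk * (x^a * y^b) := by
  subst hab
  rw [neg_pow, neg_pow, pow_add]
  ring

/-- For a Schwartz mollifier `ρ` on `ℝ²` (total integral `1`, vanishing higher moments)
and its anisotropic scaling `ρ̃_ε(x,y) = ε^{−3}ρ(x/ε, y/ε²)`, the ordinary convolutions
`f * ρ̃_ε` of a smooth compactly supported `f` converge to `f` rapidly:
for every `N` there are `C > 0`, `ε₀ ∈ (0,1)` with
`sup_z |(f * ρ̃_ε)(z) − f(z)| ≤ C ε^N` for all `ε ∈ (0,ε₀)`. -/
theorem anisoConv_rapid_convergence (ρ : SchwartzMap (ℝ × ℝ) ℂ)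
    (h1 : (∫ z : ℝ × ℝ, ρ z) = 1)
    (h2 : ∀ a b : ℕ, (a, b) ≠ (0, 0) →
      (∫ z : ℝ × ℝ, ((z.1 ^ a * z.2 ^ b : ℝ) : ℂ) * ρ z) = 0)
    (f : ℝ × ℝ → ℂ) (hf : ContDiff ℝ (⊤ : ℕ∞) f) (hsupp : HasCompactSupport f) (N : ℕ) :
    ∃ C > (0 : ℝ), ∃ ε₀ ∈ Ioo (0 : ℝ) 1, ∀ ε ∈ Ioo (0 : ℝ) ε₀, ∀ z : ℝ × ℝ,
      ‖(∫ w : ℝ × ℝ, f (z - w) * anisoScale (⇑ρ) ε w) - f z‖ ≤ C * ε ^ N := by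
  -- global bound on the (N+1)-st derivative
  obtain ⟨y0, hy0⟩ := ((hf.continuous_iteratedFDeriv (m := N+1) (by exact_mod_cast le_top)).norm
    ).exists_forall_ge_of_hasCompactSupport ((hsupp.iteratedFDeriv (N+1)).norm)
  set K : ℝ := ‖iteratedFDeriv ℝ (N+1) f y0‖ with hKdef
  have hK : ∀ y, ‖iteratedFDeriv ℝ (N+1) f y‖ ≤ K := hy0
  have hK0 : 0 ≤ K := norm_nonneg _
  set C₀ : ℝ := ∫ u : ℝ×ℝ, ‖u‖^(N+1) * ‖ρ u‖ with hC₀def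
  have hC₀0 : 0 ≤ C₀ := integral_nonneg fun u => by positivity
  refine ⟨K * C₀ + 1, by positivity, 1/2, by norm_num, ?_⟩
  intro ε hε z
  have hε0 : 0 < ε := hε.1
  have hε1 : ε < 1 := lt_trans hε.2 (by norm_num)
  set m : ℝ×ℝ → ℂ := anisoScale (⇑ρ) ε with hmdef
  -- norm of m
  have hm_norm : ∀ w : ℝ×ℝ, ‖m w‖ = (ε^3)⁻¹ * ‖ρ (w.1/ε, w.2/ε^2)‖ := by
    intro w
    rw [hmdef]
    simp only [anisoScale, norm_mul]
    congr 1
    rw [norm_inv, Complex.norm_real, Real.norm_eq_abs,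
      abs_of_pos (by positivity : (0:ℝ) < ε^3)]
  -- the anisotropic scaling contracts norms (since ε ≤ 1)
  have hcontract : ∀ u : ℝ×ℝ, ‖((ε*u.1, ε^2*u.2) : ℝ×ℝ)‖ ≤ ε * ‖u‖ := by
    intro u
    rw [Prod.norm_def, Prod.norm_def]
    refine max_le ?_ ?_
    · rw [Real.norm_eq_abs, abs_mul, abs_of_pos hε0]
      exact mul_le_mul_of_nonneg_left (le_max_left _ _) hε0.le
    · rw [Real.norm_eq_abs, abs_mul, abs_of_pos (by positivity : (0:ℝ) < ε^2)]
      calc ε^2 * |u.2| ≤ ε * |u.2| := by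
            rw [pow_two]
            exact mul_le_mul_of_nonneg_right (mul_le_of_le_one_right hε0.le hε1.le) (abs_nonneg _)
        _ ≤ ε * max ‖u.1‖ ‖u.2‖ := mul_le_mul_of_nonneg_left (le_max_right _ _) hε0.le
  -- integrability of ‖w‖^k * ‖m w‖
  have hH : ∀ k : ℕ, Integrable (fun w : ℝ×ℝ => ‖w‖^k * ‖m w‖) := by
    intro k
    set H : ℝ×ℝ → ℝ := fun u => ‖((ε*u.1, ε^2*u.2) : ℝ×ℝ)‖^k * ((ε^3)⁻¹ * ‖ρ u‖) with hHdef
    have hHint : Integrable H := by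
      refine ((ρ.integrable_pow_mul volume k).const_mul ((ε^3)⁻¹)).mono' ?_ ?_
      · refine Continuous.aestronglyMeasurable ?_
        fun_prop
      · filter_upwards with u
        rw [hHdef, Real.norm_eq_abs, abs_of_nonneg (by positivity)]
        calc ‖((ε*u.1, ε^2*u.2) : ℝ×ℝ)‖^k * ((ε^3)⁻¹ * ‖ρ u‖)
            ≤ (ε * ‖u‖)^k * ((ε^3)⁻¹ * ‖ρ u‖) := by gcongr; exact hcontract u
          _ ≤ (1 * ‖u‖)^k * ((ε^3)⁻¹ * ‖ρ u‖) := by gcongr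
          _ = (ε^3)⁻¹ * (‖u‖^k * ‖ρ u‖) := by ring
    have := cv_integrable ε⁻¹ (inv_pos.mpr hε0) H hHint
    refine this.congr (Filter.Eventually.of_forall fun w => ?_)
    simp only [hHdef]
    rw [hm_norm w]
    have e1 : ε * (ε⁻¹ * w.1) = w.1 := by field_simp
    have e2 : ε^2 * ((ε⁻¹)^2 * w.2) = w.2 := by field_simp
    have e3 : ε⁻¹ * w.1 = w.1/ε := (div_eq_inv_mul _ _).symm
    have e4 : (ε⁻¹)^2 * w.2 = w.2/ε^2 := by
      rw [inv_pow, div_eq_inv_mul]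
    rw [e1, e2, e3, e4]
  -- m is integrable
  have hm_int : Integrable m := by
    have := cv_integrable ε⁻¹ (inv_pos.mpr hε0)
      (fun u => ((ε^3 : ℝ)⁻¹ : ℂ) * ρ u) (ρ.integrable.const_mul _)
    refine this.congr (Filter.Eventually.of_forall fun w => ?_)
    have harg : ((ε⁻¹ * w.1, (ε⁻¹)^2 * w.2) : ℝ×ℝ) = (w.1/ε, w.2/ε^2) := by
      rw [Prod.mk.injEq]
      exact ⟨(div_eq_inv_mul _ _).symm, by rw [inv_pow, div_eq_inv_mul]⟩
    simp only [hmdef, anisoScale, harg]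
  -- moments of m
  have hmom0 : ∫ w : ℝ×ℝ, m w = 1 := by
    have := moment_aniso ρ hε0 0 0
    simp only [pow_zero, one_mul, mul_one, Nat.mul_zero, Nat.add_zero, Complex.ofReal_one] at this
    rw [hmdef, this, h1]
  have hmomab : ∀ a b : ℕ, (a, b) ≠ (0, 0) →
      ∫ w : ℝ×ℝ, ((w.1^a * w.2^b : ℝ):ℂ) * m w = 0 := by
    intro a b hab
    rw [hmdef, moment_aniso ρ hε0 a b, h2 a b hab, mul_zero]
  have hm_cont : Continuous m := by
    rw [hmdef]
    unfold anisoScale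
    exact continuous_const.mul (ρ.continuous.comp (by fun_prop))
  -- Taylor pieces
  set c : ℕ → (ℝ×ℝ) → ℂ := fun k w => iteratedFDeriv ℝ k f z (fun _ => -w) with hcdef
  have hc_cont : ∀ k, Continuous (fun w : ℝ×ℝ => c k w) := by
    intro k
    exact (iteratedFDeriv ℝ k f z).cont.comp (continuous_pi fun _ => continuous_neg)
  have hc_bound : ∀ (k : ℕ) (w : ℝ×ℝ), ‖c k w‖ ≤ ‖iteratedFDeriv ℝ k f z‖ * ‖w‖^k := by
    intro k w
    calc ‖c k w‖ ≤ ‖iteratedFDeriv ℝ k f z‖ * ∏ _i : Fin k, ‖-w‖ :=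
          (iteratedFDeriv ℝ k f z).le_opNorm _
      _ = ‖iteratedFDeriv ℝ k f z‖ * ‖w‖^k := by
          rw [norm_neg, Finset.prod_const, Finset.card_univ, Fintype.card_fin]
  have hck_int : ∀ k : ℕ, Integrable (fun w : ℝ×ℝ => c k w * m w) := by
    intro k
    refine ((hH k).const_mul (‖iteratedFDeriv ℝ k f z‖)).mono' ?_ ?_
    · exact ((hc_cont k).mul hm_cont).aestronglyMeasurable
    · filter_upwards with w
      rw [norm_mul]
      calc ‖c k w‖ * ‖m w‖ ≤ (‖iteratedFDeriv ℝ k f z‖ * ‖w‖^k) * ‖m w‖ := by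
            gcongr
            exact hc_bound k w
        _ = ‖iteratedFDeriv ℝ k f z‖ * (‖w‖^k * ‖m w‖) := by ring
  set T : (ℝ×ℝ) → ℂ := fun w => ∑ k ∈ Finset.range (N+1), ((k.factorial:ℝ))⁻¹ • c k w with hTdef
  have hTm_eq : (fun w : ℝ×ℝ => T w * m w)
      = fun w => ∑ k ∈ Finset.range (N+1), ((k.factorial:ℝ))⁻¹ • (c k w * m w) := by
    funext w
    rw [hTdef]
    beta_reduce
    rw [Finset.sum_mul]
    exact Finset.sum_congr rfl fun k _ => smul_mul_assoc _ _ _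
  have hT_int : Integrable (fun w : ℝ×ℝ => T w * m w) := by
    rw [hTm_eq]
    exact integrable_finset_sum _ fun k _ => (hck_int k).smul ((k.factorial:ℝ))⁻¹
  -- vanishing of the k ≥ 1 terms
  have hkzero : ∀ k : ℕ, k ≠ 0 → ∫ w : ℝ×ℝ, c k w * m w = 0 := by
    intro k hk0
    set e : Fin 2 → ℝ×ℝ := ![(1,0),(0,1)] with hedef
    set cw : (ℝ×ℝ) → Fin 2 → ℝ := fun w => ![-w.1, -w.2] with hcwdef
    have hdecomp : ∀ w : ℝ×ℝ, (fun _ : Fin k => -w) = fun _ : Fin k => ∑ j : Fin 2, cw w j • e j := by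
      intro w
      funext i
      rw [Fin.sum_univ_two]
      simp only [hcwdef, hedef]
      rw [Prod.ext_iff]
      norm_num
    set A : (Fin k → Fin 2) → ℕ := fun r => (Finset.univ.filter (fun i => r i = 0)).card with hAdef
    have hA_le : ∀ r : Fin k → Fin 2, A r ≤ k := by
      intro r
      calc A r ≤ (Finset.univ : Finset (Fin k)).card := Finset.card_filter_le _ _
        _ = k := by rw [Finset.card_univ, Fintype.card_fin]
    have hprod : ∀ (w : ℝ×ℝ) (r : Fin k → Fin 2),
        (∏ i : Fin k, cw w (r i)) = (-w.1)^(A r) * (-w.2)^(k - A r) := by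
      intro w r
      rw [← Finset.prod_filter_mul_prod_filter_not Finset.univ (fun i => r i = 0)
        (fun i => cw w (r i))]
      have h0 : ∀ i ∈ Finset.univ.filter (fun i : Fin k => r i = 0), cw w (r i) = -w.1 := by
        intro i hi
        rw [Finset.mem_filter] at hi
        rw [hi.2]
        simp [hcwdef]
      have h1' : ∀ i ∈ Finset.univ.filter (fun i : Fin k => ¬ r i = 0), cw w (r i) = -w.2 := by
        intro i hi
        rw [Finset.mem_filter] at hi
        rw [Fin.eq_one_of_ne_zero _ hi.2]
        simp [hcwdef]
      have hcard2 : (Finset.univ.filter (fun i : Fin k => ¬ r i = 0)).card = k - A r := by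
        have hsum := Finset.card_filter_add_card_filter_not
          (s := (Finset.univ : Finset (Fin k))) (p := fun i => r i = 0)
        rw [Finset.card_univ, Fintype.card_fin] at hsum
        have hA : (Finset.univ.filter (fun i : Fin k => r i = 0)).card = A r := rfl
        omega
      rw [Finset.prod_congr rfl h0, Finset.prod_congr rfl h1', Finset.prod_const,
        Finset.prod_const, hcard2]
    have hrw : ∀ w : ℝ×ℝ, c k w * m w = ∑ r : Fin k → Fin 2,
        ((((-1:ℝ)^k : ℝ):ℂ) * iteratedFDeriv ℝ k f z (fun i => e (r i)))
          * (((w.1^(A r) * w.2^(k - A r) : ℝ):ℂ) * m w) := by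
      intro w
      have h0 : c k w = ∑ r : Fin k → Fin 2,
          (∏ i : Fin k, cw w (r i)) • iteratedFDeriv ℝ k f z (fun i => e (r i)) := by
        rw [hcdef]
        beta_reduce
        rw [hdecomp w]
        rw [(iteratedFDeriv ℝ k f z).map_sum]
        exact Finset.sum_congr rfl fun r _ => ((iteratedFDeriv ℝ k f z).map_smul_univ _ _)
      rw [h0, Finset.sum_mul]
      refine Finset.sum_congr rfl fun r _ => ?_
      rw [hprod w r, sign_mono _ _ _ _ _ (Nat.add_sub_cancel' (hA_le r)), Complex.real_smul]
      push_cast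
      ring
    rw [show (fun w : ℝ×ℝ => c k w * m w) = fun w : ℝ×ℝ => ∑ r : Fin k → Fin 2,
        ((((-1:ℝ)^k : ℝ):ℂ) * iteratedFDeriv ℝ k f z (fun i => e (r i)))
          * (((w.1^(A r) * w.2^(k - A r) : ℝ):ℂ) * m w) from funext hrw]
    rw [integral_finset_sum _ (fun r _ => ((moment_aniso_integrable ρ hε0 (A r) (k - A r)).const_mul _))]
    refine Finset.sum_eq_zero fun r _ => ?_
    rw [integral_const_mul]
    have hne : ((A r, k - A r) : ℕ × ℕ) ≠ (0, 0) := by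
      intro hcontra
      rw [Prod.mk.injEq] at hcontra
      have := hA_le r
      omega
    rw [hmomab _ _ hne, mul_zero]
  -- the Taylor polynomial integrates to f z
  have hTm : ∫ w : ℝ×ℝ, T w * m w = f z := by
    rw [hTm_eq, integral_finset_sum (Finset.range (N+1))
      (f := fun (k : ℕ) (w : ℝ×ℝ) => ((k.factorial:ℝ))⁻¹ • (c k w * m w))
      (fun k _ => (hck_int k).smul ((k.factorial:ℝ))⁻¹)]
    have hterm : ∀ k ∈ Finset.range (N+1),
        ∫ w : ℝ×ℝ, ((k.factorial:ℝ))⁻¹ • (c k w * m w) = if k = 0 then f z else 0 := by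
      intro k _
      rw [integral_smul]
      by_cases hk0 : k = 0
      · subst hk0
        rw [if_pos rfl]
        have hc0 : (fun w : ℝ×ℝ => c 0 w * m w) = fun w => f z * m w := by
          funext w
          rw [hcdef]
          beta_reduce
          rw [iteratedFDeriv_zero_apply]
        rw [hc0, integral_const_mul, hmom0, mul_one]
        simp
      · rw [if_neg hk0, hkzero k hk0, smul_zero]
    rw [Finset.sum_congr rfl hterm, Finset.sum_ite_eq' (Finset.range (N+1)) 0 (fun _ => f z)]
    rw [if_pos (Finset.mem_range.mpr (by omega))]
  -- Taylor remainder estimate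
  have htaylor : ∀ w : ℝ×ℝ, ‖f (z - w) - T w‖ ≤ K * ‖w‖^(N+1) := by
    intro w
    have ht := taylor_bound N f hf K hK z (-w)
    rw [← sub_eq_add_neg, norm_neg] at ht
    exact ht
  have hfm_int : Integrable (fun w : ℝ×ℝ => f (z - w) * m w) := by
    obtain ⟨x1, hx1⟩ := (hf.continuous.norm).exists_forall_ge_of_hasCompactSupport hsupp.norm
    exact hm_int.bdd_mul ((hf.continuous.comp (by fun_prop)).aestronglyMeasurable)
      (Filter.Eventually.of_forall fun w => hx1 _)
  have hR_int : Integrable (fun w : ℝ×ℝ => (f (z - w) - T w) * m w) := by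
    have heq : (fun w : ℝ×ℝ => (f (z - w) - T w) * m w)
        = fun w => f (z - w) * m w - T w * m w := by
      funext w
      ring
    rw [heq]
    exact hfm_int.sub hT_int
  have hsplit : (∫ w : ℝ×ℝ, f (z - w) * m w) - f z = ∫ w : ℝ×ℝ, (f (z - w) - T w) * m w := by
    have heq : (fun w : ℝ×ℝ => (f (z - w) - T w) * m w)
        = fun w => f (z - w) * m w - T w * m w := by
      funext w
      ring
    rw [heq, integral_sub hfm_int hT_int, hTm]
  -- the scaling estimate
  have hscale : ∫ w : ℝ×ℝ, ‖w‖^(N+1) * ‖m w‖ ≤ ε^(N+1) * C₀ := by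
    have hcv := cv_integral ε hε0 (fun w : ℝ×ℝ => ‖w‖^(N+1) * ‖m w‖)
    have hptw : (fun w : ℝ×ℝ => ‖((ε*w.1, ε^2*w.2) : ℝ×ℝ)‖^(N+1) * ‖m (ε*w.1, ε^2*w.2)‖)
        = fun w : ℝ×ℝ => ‖((ε*w.1, ε^2*w.2) : ℝ×ℝ)‖^(N+1) * ((ε^3)⁻¹ * ‖ρ w‖) := by
      funext w
      rw [hm_norm]
      have harg : ((ε*w.1/ε, ε^2*w.2/ε^2) : ℝ×ℝ) = w := by
        rw [mul_div_cancel_left₀ _ hε0.ne', mul_div_cancel_left₀ _ (pow_ne_zero 2 hε0.ne')]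
      rw [harg]
    rw [hptw] at hcv
    have hval : ∫ w : ℝ×ℝ, ‖w‖^(N+1) * ‖m w‖
        = ∫ w : ℝ×ℝ, ‖((ε*w.1, ε^2*w.2) : ℝ×ℝ)‖^(N+1) * ‖ρ w‖ := by
      have h3 : (ε^3 : ℝ) • ((ε^3)⁻¹ • ∫ w : ℝ×ℝ, ‖w‖^(N+1) * ‖m w‖)
          = ∫ w : ℝ×ℝ, ‖w‖^(N+1) * ‖m w‖ := by
        rw [smul_smul, mul_inv_cancel₀ (by positivity), one_smul]
      rw [← h3, ← hcv, ← integral_smul]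
      refine integral_congr_ae (Filter.Eventually.of_forall fun w => ?_)
      beta_reduce
      rw [smul_eq_mul]
      field_simp
    rw [hval]
    have hRHS_int : Integrable (fun w : ℝ×ℝ => ε^(N+1) * (‖w‖^(N+1) * ‖ρ w‖)) :=
      (ρ.integrable_pow_mul volume (N+1)).const_mul _
    have hLHS_int : Integrable (fun w : ℝ×ℝ => ‖((ε*w.1, ε^2*w.2) : ℝ×ℝ)‖^(N+1) * ‖ρ w‖) := by
      refine hRHS_int.mono' ?_ ?_
      · exact Continuous.aestronglyMeasurable (by fun_prop)
      · filter_upwards with w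
        rw [Real.norm_eq_abs, abs_of_nonneg (by positivity)]
        calc ‖((ε*w.1, ε^2*w.2) : ℝ×ℝ)‖^(N+1) * ‖ρ w‖ ≤ (ε * ‖w‖)^(N+1) * ‖ρ w‖ := by
              gcongr
              exact hcontract w
          _ = ε^(N+1) * (‖w‖^(N+1) * ‖ρ w‖) := by rw [mul_pow]; ring
    calc ∫ w : ℝ×ℝ, ‖((ε*w.1, ε^2*w.2) : ℝ×ℝ)‖^(N+1) * ‖ρ w‖
        ≤ ∫ w : ℝ×ℝ, ε^(N+1) * (‖w‖^(N+1) * ‖ρ w‖) := by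
          refine integral_mono hLHS_int hRHS_int fun w => ?_
          calc ‖((ε*w.1, ε^2*w.2) : ℝ×ℝ)‖^(N+1) * ‖ρ w‖ ≤ (ε * ‖w‖)^(N+1) * ‖ρ w‖ := by
                gcongr
                exact hcontract w
            _ = ε^(N+1) * (‖w‖^(N+1) * ‖ρ w‖) := by rw [mul_pow]; ring
      _ = ε^(N+1) * C₀ := by rw [integral_const_mul]
  -- final estimate
  rw [hsplit]
  calc ‖∫ w : ℝ×ℝ, (f (z - w) - T w) * m w‖
      ≤ ∫ w : ℝ×ℝ, ‖(f (z - w) - T w) * m w‖ := norm_integral_le_integral_norm _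
    _ ≤ ∫ w : ℝ×ℝ, K * (‖w‖^(N+1) * ‖m w‖) := by
        refine integral_mono hR_int.norm ((hH (N+1)).const_mul K) fun w => ?_
        rw [norm_mul]
        calc ‖f (z - w) - T w‖ * ‖m w‖ ≤ (K * ‖w‖^(N+1)) * ‖m w‖ := by
              gcongr
              exact htaylor w
          _ = K * (‖w‖^(N+1) * ‖m w‖) := by ring
    _ = K * ∫ w : ℝ×ℝ, ‖w‖^(N+1) * ‖m w‖ := integral_const_mul _ _
    _ ≤ K * (ε^(N+1) * C₀) := mul_le_mul_of_nonneg_left hscale hK0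
    _ ≤ (K * C₀ + 1) * ε^N := by
        have h1' : K * (ε^(N+1) * C₀) = (K * C₀) * ε^N * ε := by ring
        have h2' : (K * C₀) * ε^N * ε ≤ (K * C₀) * ε^N * 1 := by
          have : (0:ℝ) ≤ (K * C₀) * ε^N := by positivity
          nlinarith [hε1.le]
        have h3' : (K * C₀) * ε^N * 1 ≤ (K * C₀ + 1) * ε^N := by
          rw [mul_one]
          have : (0:ℝ) ≤ ε^N := by positivity
          nlinarith
        linarith
end
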